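/- A word over the alphabet {a, a'} is a Dyck word (reducible to the empty word by cancellations a a' → ε) if and only if it is congruent, under the neutralization relation a N^m a' ≈ N^(m+2) (for any m ≥ 0), to the word N^|x|, where N is a fresh neutral symbol. -/

import Mathlib

/-- The Dyck alphabet Γ = {a, a'}: `op` is `a`, `cl` is `a'`. -/
inductive Gam : Type
  | op | cl
deriving DecidableEq

/-- The extended alphabet Γ ∪ {N}. -/
inductive GamN : Type
  | op | cl | N
deriving DecidableEq

def embed : Gam → GamN
  | Gam.op => GamN.op
  | Gam.cl => GamN.cl

/-- One cancellation step `a a' → ε`. -/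
def cancelStep (w w' : List Gam) : Prop :=
  ∃ u v, w = u ++ [Gam.op, Gam.cl] ++ v ∧ w' = u ++ v

/-- A word is Dyck if it reduces to the empty word by cancellations. -/
def IsDyck (w : List Gam) : Prop := Relation.ReflTransGen cancelStep w []

/-- One neutralization rewriting step `a N^m a' → N^(m+2)` (in any context);
the congruence ≈ is the equivalence generated by it. -/
def neutStep (w w' : List GamN) : Prop :=
  ∃ (u v : List GamN) (m : ℕ),
    w = u ++ [GamN.op] ++ List.replicate m GamN.N ++ [GamN.cl] ++ v ∧
    w' = u ++ List.replicate (m + 2) GamN.N ++ v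

/-!
Erasing the neutral letter `N` sends every neutralization step `a N^m a' → N^(m+2)` to a
cancellation step, and conversely every cancellation in the erasure lifts to a neutralization
step, because the letters erased between the cancelled `a` and `a'` can only be `N`'s. Hence
`w ≈ N^|w|` exactly when the erasure of `w` is Dyck, once we know that Dyck-ness is invariant
under cancellation in both directions. That confluence property comes from the depth-counter
characterisation of Dyck words, since inserting `a a'` never changes the final depth.
-/

namespace Gam

/-- `none` records that the depth went below zero, i.e. an unmatched `a'` was read. -/
def depthStep : Option ℕ → Gam → Option ℕ
  | some n, op => some (n + 1)
  | some (n + 1), cl => some n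
  | _, _ => none

def Balanced (w : List Gam) : Prop := w.foldl depthStep (some 0) = some 0

lemma depthStep_op_cl (s : Option ℕ) : depthStep (depthStep s op) cl = s := by
  cases s <;> rfl

lemma foldl_depthStep_none (w : List Gam) : w.foldl depthStep none = none := by
  induction w with
  | nil => rfl
  | cons c w ih => cases c <;> exact ih

lemma foldl_depthStep_cancel (s : Option ℕ) (u v : List Gam) :
    (u ++ [op, cl] ++ v).foldl depthStep s = (u ++ v).foldl depthStep s := by
  simp [List.foldl_append, depthStep_op_cl]

lemma balanced_iff_of_cancelStep {x y : List Gam} (h : cancelStep x y) :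
    Balanced x ↔ Balanced y := by
  obtain ⟨u, v, rfl, rfl⟩ := h
  rw [Balanced, Balanced, foldl_depthStep_cancel]

lemma op_cl_infix_of_foldl_depthStep (w : List Gam) (n : ℕ)
    (h : w.foldl depthStep (some (n + 1)) = some 0) : [op, cl] <:+: op :: w := by
  induction w generalizing n with
  | nil => simp at h
  | cons c w ih =>
    cases c with
    | op => exact (ih (n + 1) h).trans (List.suffix_cons op _).isInfix
    | cl => exact ⟨[], w, rfl⟩

lemma op_cl_infix_of_balanced {w : List Gam} (hw : w ≠ []) (h : Balanced w) :
    [op, cl] <:+: w := by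
  obtain ⟨c, w, rfl⟩ := List.exists_cons_of_ne_nil hw
  cases c with
  | op => exact op_cl_infix_of_foldl_depthStep w 0 h
  | cl => simp [Balanced, depthStep, foldl_depthStep_none] at h

lemma balanced_of_isDyck {w : List Gam} (h : IsDyck w) : Balanced w := by
  induction h using Relation.ReflTransGen.head_induction_on with
  | refl => rfl
  | head step _ ih => exact (balanced_iff_of_cancelStep step).2 ih

lemma isDyck_of_balanced {w : List Gam} (h : Balanced w) : IsDyck w := by
  by_cases hw : w = []
  · exact hw ▸ Relation.ReflTransGen.refl
  obtain ⟨u, v, rfl⟩ := op_cl_infix_of_balanced hw h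
  have step : cancelStep (u ++ [op, cl] ++ v) (u ++ v) := ⟨u, v, rfl, rfl⟩
  exact .head step (isDyck_of_balanced ((balanced_iff_of_cancelStep step).1 h))
termination_by w.length
decreasing_by subst_vars; simp

lemma isDyck_iff_balanced (w : List Gam) : IsDyck w ↔ Balanced w :=
  ⟨balanced_of_isDyck, isDyck_of_balanced⟩

lemma isDyck_iff_of_cancelStep {x y : List Gam} (h : cancelStep x y) : IsDyck x ↔ IsDyck y := by
  rw [isDyck_iff_balanced, isDyck_iff_balanced, balanced_iff_of_cancelStep h]

end Gam

def GamN.toGam : GamN → Option Gam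
  | op => some Gam.op
  | cl => some Gam.cl
  | N => none

def eraseN (w : List GamN) : List Gam := w.filterMap GamN.toGam

lemma eraseN_append (u v : List GamN) : eraseN (u ++ v) = eraseN u ++ eraseN v :=
  List.filterMap_append

lemma eraseN_replicate (n : ℕ) : eraseN (List.replicate n GamN.N) = [] := by
  simp [eraseN, GamN.toGam]

lemma eraseN_map_embed (x : List Gam) : eraseN (x.map embed) = x := by
  have : GamN.toGam ∘ embed = some := by
    funext c
    cases c <;> rfl
  rw [eraseN, List.filterMap_map, this, List.filterMap_some]

lemma exists_eq_replicate_of_eraseN_eq_nil {w : List GamN} (h : eraseN w = []) :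
    ∃ m, w = List.replicate m GamN.N := by
  refine ⟨w.length, List.eq_replicate_iff.2 ⟨rfl, fun c hc => ?_⟩⟩
  have hnone := List.filterMap_eq_nil_iff.1 h c hc
  cases c <;> first | rfl | cases hnone

lemma cancelStep_eraseN_of_neutStep {w w' : List GamN} (h : neutStep w w') :
    cancelStep (eraseN w) (eraseN w') := by
  obtain ⟨u, v, m, rfl, rfl⟩ := h
  exact ⟨eraseN u, eraseN v, by simp [eraseN, GamN.toGam],
    by simp [eraseN_append, eraseN_replicate]⟩

lemma exists_neutStep_of_cancelStep_eraseN {w : List GamN} {y : List Gam}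
    (h : cancelStep (eraseN w) y) :
    ∃ w', neutStep w w' ∧ eraseN w' = y ∧ w'.length = w.length := by
  obtain ⟨u', v', hw, rfl⟩ := h
  simp only [List.append_assoc, List.cons_append, List.nil_append] at hw
  obtain ⟨u, l, rfl, hu, hl⟩ := List.filterMap_eq_append_iff.1 hw
  obtain ⟨n₁, a, l', rfl, hn₁, ha, hl'⟩ := List.filterMap_eq_cons_iff.1 hl
  obtain ⟨n₂, b, v, rfl, hn₂, hb, hv⟩ := List.filterMap_eq_cons_iff.1 hl'
  obtain ⟨m₁, rfl⟩ := exists_eq_replicate_of_eraseN_eq_nil (List.filterMap_eq_nil_iff.2 hn₁)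
  obtain ⟨m₂, rfl⟩ := exists_eq_replicate_of_eraseN_eq_nil (List.filterMap_eq_nil_iff.2 hn₂)
  obtain rfl : a = GamN.op := by cases a <;> cases ha; rfl
  obtain rfl : b = GamN.cl := by cases b <;> cases hb; rfl
  refine ⟨u ++ List.replicate m₁ GamN.N ++ List.replicate (m₂ + 2) GamN.N ++ v,
    ⟨u ++ List.replicate m₁ GamN.N, v, m₂, by simp, rfl⟩, ?_, ?_⟩
  · simp only [eraseN_append, eraseN_replicate, List.append_nil]
    rw [eraseN, eraseN, hu, hv]
  · simp only [List.length_append, List.length_replicate, List.length_cons]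
    omega

lemma eqvGen_replicate_of_isDyck_eraseN {w : List GamN} (h : IsDyck (eraseN w)) :
    Relation.EqvGen neutStep w (List.replicate w.length GamN.N) := by
  generalize hx : eraseN w = x at h
  induction h using Relation.ReflTransGen.head_induction_on generalizing w with
  | refl =>
    obtain ⟨m, rfl⟩ := exists_eq_replicate_of_eraseN_eq_nil hx
    rw [List.length_replicate]
    exact .refl _
  | head step _ ih =>
    obtain ⟨w', hww', rfl, hlen⟩ := exists_neutStep_of_cancelStep_eraseN (hx ▸ step)
    exact .trans _ _ _ (.rel _ _ hww') (hlen ▸ ih rfl)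

lemma isDyck_eraseN_iff_of_eqvGen {w w' : List GamN} (h : Relation.EqvGen neutStep w w') :
    IsDyck (eraseN w) ↔ IsDyck (eraseN w') := by
  induction h with
  | rel _ _ step => exact Gam.isDyck_iff_of_cancelStep (cancelStep_eraseN_of_neutStep step)
  | refl => rfl
  | symm _ _ _ ih => exact ih.symm
  | trans _ _ _ _ _ ih₁ ih₂ => exact ih₁.trans ih₂

/-- A word over Γ is Dyck iff it is ≈-congruent to `N^{|x|}`. -/
theorem dyck_iff_neutralizable (x : List Gam) :
    IsDyck x ↔
      Relation.EqvGen neutStep (x.map embed) (List.replicate x.length GamN.N) := by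
  constructor
  · intro h
    simpa using eqvGen_replicate_of_isDyck_eraseN (w := x.map embed) (by rwa [eraseN_map_embed])
  · intro h
    have key := isDyck_eraseN_iff_of_eqvGen h
    rw [eraseN_map_embed, eraseN_replicate] at key
    exact key.2 .refl
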